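/- Let b ≥ 2 be an integer with prime factorization b = p₁^{a₁} p₂^{a₂} ⋯ p_r^{a_r} with r ≥ 2 distinct primes, let M = max_{1≤m≤r} a_m(p_m−1), let I = {i : a_i(p_i−1) = M}, and assume |I| ≥ 2 with p₁ = max_{i∈I} p_i (and a₁(p₁−1) = M). Then for every sufficiently large positive integer n: if max_{i∈I} s_{p_i}(n) = s_{p₁}(n) then p₁^{a₁} does not divide ℓ_b(n!), and if max_{i∈I} s_{p_i}(n) > a₁(p₁−1) + s_{p₁}(n) then p₁^{a₁} divides ℓ_b(n!). -/

import Mathlib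

/-- The state reached after feeding the base-`k` digits of `n`
(most significant digit first, empty string for `n = 0`) into the
transition function `ρ` starting from state `q₀`. -/
def autoRun {Q : Type} (k : ℕ) (ρ : Q → Fin k → Q) (q₀ : Q) (n : ℕ) : Q :=
  (Nat.digits k n).reverse.foldl (fun q d => if h : d < k then ρ q ⟨d, h⟩ else q) q₀

/-- A sequence `a : ℕ → Δ` is `k`-automatic: some DFAO over the alphabet
`{0, …, k-1}` computes `a n` from the base-`k` digits of `n`
(most significant digit first). -/
def IsAutomatic {Δ : Type*} (k : ℕ) (a : ℕ → Δ) : Prop :=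
  ∃ (Q : Type) (_ : Finite Q) (ρ : Q → Fin k → Q) (q₀ : Q) (τ : Q → Δ),
    ∀ n : ℕ, a n = τ (autoRun k ρ q₀ n)

/-- `lnz b n` is the last nonzero digit of `n` in base `b`:
`(n / b ^ v_b(n)) % b`, where `v_b(n) = padicValNat b n` is the largest `t`
with `b ^ t ∣ n`. -/
def lnz (b n : ℕ) : ℕ := (n / b ^ padicValNat b n) % b

/-- `digSum b n` is the sum of the digits of `n` written in base `b`. -/
def digSum (b n : ℕ) : ℕ := (Nat.digits b n).sum

open scoped Nat

/-!
Write `w_i(m) = ⌊v_{p_i}(m) / a_i⌋`. Then `v_b(m) = min_i w_i(m)`, and `p₀ ^ a₀` divides `ℓ_b(m)`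
exactly when some `w_i(m)` is smaller than `w₀(m)`. By Legendre's formula
`w_i(n!) = ⌊(n - s_{p_i}(n)) / (a_i (p_i - 1))⌋`. For `i ∈ I` the denominator is `M`, so the
comparison with `w₀(n!)` is decided by the digit sums, and a gap of more than `M` forces a strict
drop. For `i ∉ I` the denominator is smaller than `M`, and since `s_p(n) = O(log n)` this makes
`w_i(n!) ≥ w₀(n!)` for all large `n`.
-/

open Filter Function

theorem pow_dvd_lnz_iff {b p a m : ℕ} (hp : p.Prime) (hb : b ≠ 0) (hpb : padicValNat p b = a)
    (hm : m ≠ 0) : p ^ a ∣ lnz b m ↔ a * (padicValNat b m + 1) ≤ padicValNat p m := by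
  have := Fact.mk hp
  obtain ⟨c, hc⟩ : b ^ padicValNat b m ∣ m := pow_padicValNat_dvd
  have hc0 : c ≠ 0 := by rintro rfl; exact hm (by rw [hc, mul_zero])
  have hvm : padicValNat p m = padicValNat b m * a + padicValNat p c := by
    conv_lhs => rw [hc]
    rw [padicValNat.mul (pow_ne_zero _ hb) hc0, padicValNat.pow, hpb]
  unfold lnz
  rw [Nat.dvd_mod_iff (hpb ▸ pow_padicValNat_dvd),
    Nat.div_eq_of_eq_mul_right (Nat.pos_of_ne_zero (pow_ne_zero _ hb)) hc,
    padicValNat_dvd_iff_le hc0, hvm, mul_add_one, mul_comm a]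
  omega

section PrimePowerProduct

variable {ι : Type*} [Fintype ι] {p a : ι → ℕ}

theorem padicValNat_prod_pow (hp : ∀ i, (p i).Prime) (hpinj : Injective p) (j : ι) :
    padicValNat (p j) (∏ i, p i ^ a i) = a j := by
  have := Fact.mk (hp j)
  rw [← Nat.factorization_def _ (hp j),
    Nat.factorization_prod fun i _ => pow_ne_zero _ (hp i).ne_zero]
  simp only [(hp _).factorization_pow, Finsupp.coe_finsetSum, Finset.sum_apply,
    Finsupp.single_apply]
  exact (Finset.sum_eq_single j (fun i _ hij => if_neg (hpinj.ne hij)) (by simp)).trans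
    (if_pos rfl)

theorem pow_prod_pow_dvd_iff (hp : ∀ i, (p i).Prime) (hpinj : Injective p) (t : ℕ) {m : ℕ}
    (hm : m ≠ 0) : (∏ i, p i ^ a i) ^ t ∣ m ↔ ∀ i, t * a i ≤ padicValNat (p i) m := by
  simp only [← Finset.prod_pow, ← pow_mul]
  constructor
  · intro h i
    have := Fact.mk (hp i)
    rw [← padicValNat_dvd_iff_le hm, mul_comm]
    exact (Finset.dvd_prod_of_mem _ (Finset.mem_univ i)).trans h
  · intro h
    rw [← Int.natCast_dvd_natCast, Nat.cast_prod]
    refine Fintype.prod_dvd_of_coprime (fun i j hij => ?_) fun i => ?_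
    · simp only [Nat.cast_pow]
      exact (Nat.isCoprime_iff_coprime.2
        ((Nat.coprime_primes (hp i) (hp j)).2 (hpinj.ne hij))).pow
    · have := Fact.mk (hp i)
      rw [Int.natCast_dvd_natCast, padicValNat_dvd_iff_le hm, mul_comm]
      exact h i

theorem le_padicValNat_prod_pow_iff (hp : ∀ i, (p i).Prime) (hpinj : Injective p)
    (ha : ∀ i, 0 < a i) (hb : ∏ i, p i ^ a i ≠ 1) (t : ℕ) {m : ℕ} (hm : m ≠ 0) :
    t ≤ padicValNat (∏ i, p i ^ a i) m ↔ ∀ i, t ≤ padicValNat (p i) m / a i := by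
  simp only [← padicValNat_dvd_iff_le_of_ne_one hb hm, pow_prod_pow_dvd_iff hp hpinj t hm,
    Nat.le_div_iff_mul_le (ha _)]

theorem pow_dvd_lnz_prod_pow_iff (hp : ∀ i, (p i).Prime) (hpinj : Injective p)
    (ha : ∀ i, 0 < a i) (hb : ∏ i, p i ^ a i ≠ 1) {m : ℕ} (hm : m ≠ 0) (j : ι) :
    p j ^ a j ∣ lnz (∏ i, p i ^ a i) m ↔
      ∃ i, padicValNat (p i) m / a i < padicValNat (p j) m / a j := by
  rw [pow_dvd_lnz_iff (hp j) (Finset.prod_ne_zero_iff.2 fun i _ => pow_ne_zero _ (hp i).ne_zero)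
    (padicValNat_prod_pow hp hpinj j) hm, mul_comm, ← Nat.le_div_iff_mul_le (ha j),
    Nat.add_one_le_iff, ← not_le, le_padicValNat_prod_pow_iff hp hpinj ha hb _ hm]
  simp only [not_forall, not_le]

end PrimePowerProduct

theorem padicValNat_factorial_div_eq {p : ℕ} (hp : p.Prime) (a n : ℕ) :
    padicValNat p n ! / a = (n - digSum p n) / (a * (p - 1)) := by
  have := Fact.mk hp
  rw [digSum, ← sub_one_mul_padicValNat_factorial, mul_comm a, ← Nat.div_div_eq_div_mul,
    Nat.mul_div_cancel_left _ (Nat.sub_pos_of_lt hp.one_lt)]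

theorem Nat.sub_div_le_sub_div_of_lt {n s t M M' : ℕ} (hM' : 0 < M') (hlt : M' < M)
    (h : M * t + s ≤ n) : (n - s) / M ≤ (n - t) / M' := by
  rw [Nat.le_div_iff_mul_le hM']
  have hq : (n - s) / M * M ≤ n - s := Nat.div_mul_le_self _ _
  have ht : t ≤ (n - s) / M := (Nat.le_div_iff_mul_le (by omega)).2 (by rw [mul_comm]; omega)
  have hM'M : (n - s) / M * M' + (n - s) / M ≤ (n - s) / M * M := by
    rw [← Nat.mul_add_one]; exact Nat.mul_le_mul_left _ hlt
  omega

theorem Nat.sub_div_lt_sub_div {n s t M : ℕ} (hM : 0 < M) (ht : t ≤ n) (h : M + s ≤ t) :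
    (n - t) / M < (n - s) / M := by
  calc (n - t) / M < (n - t) / M + 1 := Nat.lt_add_one _
    _ = (n - t + M) / M := (Nat.add_div_right _ hM).symm
    _ ≤ (n - s) / M := Nat.div_le_div_right (by omega)

theorem eventually_mul_le_pow (K : ℕ) {p : ℕ} (hp : 1 < p) : ∀ᶠ L in atTop, K * L ≤ p ^ L := by
  have hp' : (1 : ℝ) < p := by exact_mod_cast hp
  filter_upwards [(isLittleO_coe_const_pow_of_one_lt (R := ℝ) hp').bound
    (c := 1 / (K + 1)) (by positivity)] with L hL
  rw [Real.norm_natCast, norm_pow, Real.norm_natCast] at hL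
  have : (K : ℝ) * L ≤ p ^ L := by
    calc (K : ℝ) * L ≤ (K + 1) * L := by gcongr; linarith
      _ ≤ (K + 1) * (1 / (K + 1) * p ^ L) := by gcongr
      _ = p ^ L := by field_simp
  exact_mod_cast this

theorem eventually_mul_digSum_le (C : ℕ) {p : ℕ} (hp : 1 < p) :
    ∀ᶠ n in atTop, C * digSum p n ≤ n := by
  obtain ⟨L₀, hL₀⟩ := eventually_atTop.1 (eventually_mul_le_pow (C * p * p) hp)
  refine eventually_atTop.2 ⟨p ^ L₀, fun n hn => ?_⟩
  have hn0 : n ≠ 0 := (pow_pos (by omega) L₀).trans_le hn |>.ne'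
  set L := (Nat.digits p n).length
  have hsum : digSum p n ≤ L * p :=
    List.sum_le_card_nsmul _ _ fun d hd => (Nat.digits_lt_base hp hd).le
  have hL : L₀ ≤ L :=
    ((Nat.pow_lt_pow_iff_right (by omega)).1 (hn.trans_lt (Nat.lt_base_pow_length_digits hp))).le
  refine Nat.le_of_mul_le_mul_left ?_ (by omega : 0 < p)
  calc p * (C * digSum p n) ≤ p * (C * (L * p)) := by gcongr
    _ = C * p * p * L := by ring
    _ ≤ p ^ L := hL₀ L hL
    _ ≤ p * n := Nat.base_pow_length_digits_le p n hp hn0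

/-- Let `b = ∏ i, p i ^ a i` with `r ≥ 2` distinct primes, let
`I = {i : a i * (p i - 1) = max_m a m * (p m - 1)}` and assume `|I| ≥ 2`,
with the index `0` realizing the maximum and `p 0 = max_{i ∈ I} p i`.
Then for all sufficiently large `n`: if `max_{i ∈ I} s_{p i} n = s_{p 0} n`
then `p 0 ^ a 0 ∤ ℓ_b (n !)`, and if
`max_{i ∈ I} s_{p i} n > a 0 * (p 0 - 1) + s_{p 0} n` then
`p 0 ^ a 0 ∣ ℓ_b (n !)`. -/
theorem lnz_factorial_divisibility_dichotomy (b r : ℕ) (hb : 2 ≤ b) (hr : 2 ≤ r)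
    (p a : Fin r → ℕ) (hp : ∀ i, (p i).Prime) (hpinj : Function.Injective p)
    (ha : ∀ i, 0 < a i) (hfac : b = ∏ i, p i ^ a i)
    (hM : ∀ m : Fin r, a m * (p m - 1) ≤ a ⟨0, by omega⟩ * (p ⟨0, by omega⟩ - 1))
    (I : Finset (Fin r))
    (hI : I = Finset.univ.filter
      (fun i => a i * (p i - 1) = a ⟨0, by omega⟩ * (p ⟨0, by omega⟩ - 1))) :
    ∃ N : ℕ, ∀ n : ℕ, N ≤ n → 0 < n →
      (I.sup (fun i => digSum (p i) n) = digSum (p ⟨0, by omega⟩) n →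
        ¬ p ⟨0, by omega⟩ ^ a ⟨0, by omega⟩ ∣ lnz b (Nat.factorial n)) ∧
      (a ⟨0, by omega⟩ * (p ⟨0, by omega⟩ - 1) + digSum (p ⟨0, by omega⟩) n <
          I.sup (fun i => digSum (p i) n) →
        p ⟨0, by omega⟩ ^ a ⟨0, by omega⟩ ∣ lnz b (Nat.factorial n)) := by
  subst hfac
  set i₀ : Fin r := ⟨0, by omega⟩
  have hpos : ∀ i, 0 < a i * (p i - 1) := fun i =>
    Nat.mul_pos (ha i) (Nat.sub_pos_of_lt (hp i).one_lt)
  have hmemI : ∀ i, i ∈ I ↔ a i * (p i - 1) = a i₀ * (p i₀ - 1) := by simp [hI]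
  obtain ⟨N, hN⟩ := eventually_atTop.1
    (eventually_all.2 fun i => eventually_mul_digSum_le (2 * (a i₀ * (p i₀ - 1))) (hp i).one_lt)
  refine ⟨N, fun n hn _ => ?_⟩
  simp only [pow_dvd_lnz_prod_pow_iff hp hpinj ha (by omega) (Nat.factorial_ne_zero n),
    padicValNat_factorial_div_eq (hp _)]
  constructor
  · rintro hsup ⟨i, hi⟩
    refine hi.not_ge ?_
    by_cases hiI : i ∈ I
    · have hsi : digSum (p i) n ≤ digSum (p i₀) n :=
        hsup ▸ Finset.le_sup (f := fun i => digSum (p i) n) hiI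
      rw [(hmemI i).1 hiI]
      exact Nat.div_le_div_right (Nat.sub_le_sub_left hsi n)
    · have hsi := hN n hn i
      have hs₀ := hN n hn i₀
      have hs₀M := Nat.le_mul_of_pos_left (digSum (p i₀) n) (hpos i₀)
      exact Nat.sub_div_le_sub_div_of_lt (hpos i) ((hM i).lt_of_ne (mt (hmemI i).2 hiI))
        (by linarith)
  · intro hlt
    obtain ⟨j, hj, hsup⟩ := Finset.exists_mem_eq_sup I ⟨i₀, (hmemI i₀).2 rfl⟩
      (fun i => digSum (p i) n)
    refine ⟨j, ?_⟩
    rw [(hmemI j).1 hj]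
    exact Nat.sub_div_lt_sub_div (hpos i₀) (Nat.digit_sum_le _ _) (by omega)
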